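/- Let p ≡ 2 (mod 3) be an odd prime and let T_p = [1/(i² - ij + j²)]_{1≤i,j≤p-1} be the matrix over F_p (entries are inverses in F_p of the residues i² - ij + j², which are nonzero mod p). Then det T_p is congruent mod p to 2 times a nonzero square; equivalently, the Legendre symbol (det T_p / p) = (2/p). -/

import Mathlib

/-!
Put `Φ t = t ^ 2 - t + 1` and `g t = t / Φ t`. As `x ^ 2 - x y + y ^ 2 = y ^ 2 Φ (x / y)`, the
matrix is `D C D` with `D = diag (1 / i)` and `C i j = g (i / j)`, a group matrix of the cyclic
group `F_p^×`. The characters `x ↦ x⁻ʲ` diagonalise it, with eigenvalues the moments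
`λ_a = ∑_{t ≠ 0} t ^ a / Φ t` for `a = 1, …, p - 1`.

Since `p ≡ 2 (mod 3)`, `Φ` has no root in `F_p`. The identity `t ^ 3 + 1 = (t + 1) Φ t` gives
`λ_{a+3} = -λ_a`, the symmetry `Φ (1 / t) = Φ t / t ^ 2` gives `λ_a = λ_{p+1-a}`, and
`Φ (1 - t) = Φ t` pins down `λ_0 = -1/3`, `λ_1 = 1/3`. Hence `3 λ_a = 2 cos (π a / 3) ∈ {±1, ±2}`.
Pairing `a` with `p + 1 - a` leaves `∏ λ_a = λ_1 λ_{(p+1)/2} · (square)`, and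
`λ_{(p+1)/2} = ±2/3`, the sign being negative exactly when `p ≡ 1 (mod 4)`, i.e. when `-1` is a
square.
-/

open Finset

theorem Finset.prod_range_eq_mul_sq_of_reflect {M : Type*} [CommMonoid M] (f : ℕ → M) (m : ℕ)
    (hf : ∀ j < m, f (2 * m + 1 - j) = f (j + 1)) :
    ∏ j ∈ range (2 * m + 2), f j = f 0 * f (m + 1) * (∏ j ∈ range m, f (j + 1)) ^ 2 := by
  rw [show 2 * m + 2 = m + 2 + m by ring, prod_range_add, prod_range_succ, prod_range_succ']
  have hupper : ∏ j ∈ range m, f (m + 2 + j) = ∏ j ∈ range m, f (j + 1) := by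
    rw [← prod_range_reflect (fun j => f (j + 1))]
    refine prod_congr rfl fun j hj => ?_
    have hj := mem_range.mp hj
    rw [← hf (m - 1 - j) (by omega)]
    congr 1
    omega
  rw [hupper, sq]
  ac_rfl

theorem inv_sq_sub_mul_add_sq_eq {F : Type*} [Field F] {x y : F} (hx : x ≠ 0) (hy : y ≠ 0) :
    (x ^ 2 - x * y + y ^ 2)⁻¹ = x⁻¹ * (x / y / ((x / y) ^ 2 - x / y + 1)) * y⁻¹ := by
  have h : (x / y) ^ 2 - x / y + 1 = (x ^ 2 - x * y + y ^ 2) / y ^ 2 := by field_simp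
  rw [h, div_div_eq_mul_div]
  field_simp

theorem Fintype.sum_eq_add_sum_units {G₀ M : Type*} [GroupWithZero G₀] [Fintype G₀] [DecidableEq G₀]
    [AddCommMonoid M] (g : G₀ → M) : ∑ t : G₀, g t = g 0 + ∑ t : G₀ˣ, g t := by
  rw [Fintype.sum_eq_add_sum_compl 0, sum_subtype _ (p := (· ≠ 0)) (by simp),
    ← Fintype.sum_equiv unitsEquivNeZero (fun t => g t) _ (fun _ => rfl)]

theorem Matrix.det_of_apply_div_eq_prod {F : Type*} [Field F] [Fintype F] [DecidableEq F] {n : ℕ}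
    (e : Fin n ≃ Fˣ) (g : F → F) :
    (Matrix.of fun i j => g (e i / e j)).det = ∏ j : Fin n, ∑ z : Fˣ, g z * (z : F) ^ (j : ℕ) := by
  set V := Matrix.vandermonde fun i => (e i : F)⁻¹
  have hV : V.det ≠ 0 := Matrix.det_vandermonde_ne_zero_iff.mpr
    fun i j h => e.injective (Units.ext (inv_injective h))
  have hMV : Matrix.of (fun i j => g (e i / e j)) * V =
      V * Matrix.diagonal fun j : Fin n => ∑ z : Fˣ, g z * (z : F) ^ (j : ℕ) := by
    ext i j
    rw [Matrix.mul_diagonal, Matrix.mul_apply]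
    simp only [V, Matrix.of_apply, Matrix.vandermonde_apply]
    rw [e.sum_comp (fun y : Fˣ => g (e i / y) * ((y : F)⁻¹) ^ (j : ℕ)),
      ← (Equiv.divLeft (e i)).sum_comp, mul_sum]
    refine sum_congr rfl fun z _ => ?_
    simp only [Equiv.divLeft_apply, Units.val_div_eq_div_val, div_div_cancel₀ (e i).ne_zero]
    rw [inv_div, div_pow, div_eq_mul_inv, inv_pow]
    ring
  have := congrArg Matrix.det hMV
  rw [Matrix.det_mul, Matrix.det_mul, Matrix.det_diagonal, mul_comm] at this
  exact mul_left_cancel₀ hV this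

theorem ZMod.natCast_ne_zero_of_pos_of_lt {n k : ℕ} (h0 : 0 < k) (hk : k < n) :
    (k : ZMod n) ≠ 0 := by
  rw [Ne, ZMod.natCast_eq_zero_iff]
  exact Nat.not_dvd_of_pos_of_lt h0 hk

noncomputable def ZMod.finEquivUnits (p : ℕ) [Fact p.Prime] : Fin (p - 1) ≃ (ZMod p)ˣ :=
  Equiv.ofBijective
    (fun i => Units.mk0 ((i + 1 : ℕ) : ZMod p)
      (natCast_ne_zero_of_pos_of_lt i.succ_pos (by omega))) <|
    (Fintype.bijective_iff_injective_and_card _).mpr ⟨fun i j hij => by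
      have h := (ZMod.natCast_eq_natCast_iff' _ _ p).mp (congrArg Units.val hij)
      rw [Nat.mod_eq_of_lt (by omega), Nat.mod_eq_of_lt (by omega)] at h
      exact Fin.ext (by omega), by rw [Fintype.card_fin, ZMod.card_units]⟩

theorem ZMod.coe_finEquivUnits_apply (p : ℕ) [Fact p.Prime] (i : Fin (p - 1)) :
    (finEquivUnits p i : ZMod p) = ((i + 1 : ℕ) : ZMod p) :=
  rfl

namespace FiniteField

variable {F : Type*} [Field F] [Fintype F]

theorem natCast_ne_zero_of_coprime_card {m : ℕ} (hm : m.Coprime (Fintype.card F)) :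
    (m : F) ≠ 0 := by
  intro h
  have hm' : ringChar F ∣ m := (CharP.cast_eq_zero_iff F (ringChar F) m).mp h
  have hq : ringChar F ∣ Fintype.card F :=
    (CharP.cast_eq_zero_iff F (ringChar F) _).mp (FiniteField.cast_card_eq_zero F)
  exact CharP.ringChar_ne_one (Nat.eq_one_of_dvd_coprimes hm hm' hq)

theorem three_ne_zero_of_card_mod_three (hF : Fintype.card F % 3 = 2) : (3 : F) ≠ 0 := by
  exact_mod_cast natCast_ne_zero_of_coprime_card (F := F) (m := 3)
    ((Nat.Prime.coprime_iff_not_dvd Nat.prime_three).mpr (by omega))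

theorem two_ne_zero_of_odd_card (hF : Odd (Fintype.card F)) : (2 : F) ≠ 0 := by
  exact_mod_cast natCast_ne_zero_of_coprime_card (F := F) (m := 2)
    ((Nat.Prime.coprime_iff_not_dvd Nat.prime_two).mpr (by have := Nat.odd_iff.mp hF; omega))

/-- A root satisfies `t ^ 3 = -1`; as `card F - 1 ≡ 1 (mod 3)` this forces `t = ±1`, which is a root
only in characteristic `3`. -/
theorem sq_sub_self_add_one_ne_zero (hF : Fintype.card F % 3 = 2) (t : F) :
    t ^ 2 - t + 1 ≠ 0 := by
  intro h
  have ht : t ≠ 0 := by rintro rfl; norm_num at h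
  have hcube : t ^ 3 = -1 := by linear_combination (t + 1) * h
  obtain ⟨k, hk⟩ : ∃ k, Fintype.card F - 1 = 3 * k + 1 := ⟨Fintype.card F / 3, by omega⟩
  have hsign : (-1 : F) ^ k * t = 1 := by
    rw [← hcube, ← pow_mul, ← pow_succ, ← hk, FiniteField.pow_card_sub_one_eq_one t ht]
  have hsq : t ^ 2 = 1 := by
    have : ((-1 : F) ^ k) ^ 2 = 1 := by rw [← pow_mul, mul_comm, pow_mul]; norm_num
    linear_combination (-t ^ 2) * this + ((-1) ^ k * t + 1) * hsign
  exact three_ne_zero_of_card_mod_three hF (by linear_combination (2 + t) * h - (1 + t) * hsq)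

variable [DecidableEq F]

variable (F) in
noncomputable def kernelMoment (a : ℕ) : F :=
  ∑ t : Fˣ, (t : F) ^ a / ((t : F) ^ 2 - t + 1)

theorem kernelMoment_add_three_add_kernelMoment (hF : Fintype.card F % 3 = 2) (a : ℕ) :
    kernelMoment F (a + 3) + kernelMoment F a =
      (if Fintype.card F - 1 ∣ a + 1 then -1 else 0) +
        (if Fintype.card F - 1 ∣ a then -1 else 0) := by
  rw [← sum_pow_units, ← sum_pow_units, kernelMoment, kernelMoment, ← sum_add_distrib,
    ← sum_add_distrib]
  refine sum_congr rfl fun t _ => ?_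
  rw [← add_div, div_eq_iff (sq_sub_self_add_one_ne_zero hF (t : F))]
  ring

theorem kernelMoment_add_three (hF : Fintype.card F % 3 = 2) {a : ℕ} (ha : 1 ≤ a)
    (ha' : a + 3 < Fintype.card F) : kernelMoment F (a + 3) = -kernelMoment F a := by
  have h := kernelMoment_add_three_add_kernelMoment hF a
  rw [if_neg (fun h => by have := Nat.le_of_dvd (by omega) h; omega),
    if_neg (fun h => by have := Nat.le_of_dvd (by omega) h; omega)] at h
  linear_combination h

theorem kernelMoment_eq_of_add_eq (hF : Fintype.card F % 3 = 2) {a b k : ℕ}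
    (hab : a + b = 2 + (Fintype.card F - 1) * k) : kernelMoment F a = kernelMoment F b := by
  rw [kernelMoment, kernelMoment, ← Equiv.sum_comp (Equiv.inv Fˣ)]
  refine sum_congr rfl fun t _ => ?_
  have ht : (t : F) ≠ 0 := t.ne_zero
  have hpow : (t : F) ^ b = (t : F)⁻¹ ^ a * (t : F) ^ 2 := by
    rw [inv_pow, eq_inv_mul_iff_mul_eq₀ (pow_ne_zero _ ht), ← pow_add, hab, pow_add, pow_mul,
      FiniteField.pow_card_sub_one_eq_one _ ht, one_pow, mul_one]
  simp only [Equiv.inv_apply, Units.val_inv_eq_inv_val]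
  rw [div_eq_div_iff (sq_sub_self_add_one_ne_zero hF _) (sq_sub_self_add_one_ne_zero hF _), hpow]
  field_simp
  ring

theorem kernelMoment_two (hF : Fintype.card F % 3 = 2) :
    kernelMoment F 2 = kernelMoment F 1 - kernelMoment F 0 - 1 := by
  have h : kernelMoment F 2 - kernelMoment F 1 + kernelMoment F 0 = ∑ t : Fˣ, (t : F) ^ 0 := by
    simp only [kernelMoment, ← sum_sub_distrib, ← sum_add_distrib]
    refine sum_congr rfl fun t _ => ?_
    rw [← sub_div, ← add_div, div_eq_iff (sq_sub_self_add_one_ne_zero hF _)]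
    ring
  rw [sum_pow_units, if_pos (dvd_zero _)] at h
  linear_combination h

theorem two_mul_kernelMoment_one :
    2 * kernelMoment F 1 = kernelMoment F 0 + 1 := by
  have hsum (a : ℕ) : ∑ t : F, t ^ a / (t ^ 2 - t + 1) = 0 ^ a + kernelMoment F a := by
    rw [Fintype.sum_eq_add_sum_units, kernelMoment]; norm_num
  have hrefl : ∑ t : F, t / (t ^ 2 - t + 1) = ∑ t : F, (1 - t) / (t ^ 2 - t + 1) := by
    rw [← Equiv.sum_comp (Equiv.subLeft 1)]
    refine sum_congr rfl fun t _ => ?_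
    simp only [Equiv.subLeft_apply]
    ring
  rw [sum_congr rfl fun t _ => sub_div 1 t _, sum_sub_distrib] at hrefl
  have h0 := hsum 0
  have h1 := hsum 1
  simp only [pow_zero, pow_one] at h0 h1
  rw [h0, h1] at hrefl
  linear_combination hrefl

theorem three_mul_kernelMoment_zero (hF : Fintype.card F % 3 = 2) :
    3 * kernelMoment F 0 = -1 := by
  have h02 := kernelMoment_eq_of_add_eq (F := F) hF (a := 0) (b := 2) (k := 0) rfl
  linear_combination 2 * h02 + 2 * kernelMoment_two hF + two_mul_kernelMoment_one (F := F)

theorem three_mul_kernelMoment_one (hF : Fintype.card F % 3 = 2) :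
    3 * kernelMoment F 1 = 1 := by
  have h02 := kernelMoment_eq_of_add_eq (F := F) hF (a := 0) (b := 2) (k := 0) rfl
  linear_combination h02 + kernelMoment_two hF + 2 * two_mul_kernelMoment_one (F := F)

/-- The trace `ω ^ a + ω⁻¹ ^ a = 2 cos (π a / 3)` of `ω ^ a`, for a primitive sixth root of
unity `ω`. -/
def sixthRootTrace (a : ℕ) : ℤ :=
  match a % 6 with
  | 0 => 2
  | 1 => 1
  | 2 => -1
  | 3 => -2
  | 4 => -1
  | _ => 1

theorem sixthRootTrace_add_three (a : ℕ) : sixthRootTrace (a + 3) = -sixthRootTrace a := by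
  have h := Nat.mod_lt a (show 6 > 0 by norm_num)
  interval_cases hr : a % 6 <;> simp [sixthRootTrace, Nat.add_mod, hr]

theorem sixthRootTrace_cast_ne_zero {R : Type*} [Ring R] [Nontrivial R] (h2 : (2 : R) ≠ 0) (a : ℕ) :
    (sixthRootTrace a : R) ≠ 0 := by
  have h := Nat.mod_lt a (show 6 > 0 by norm_num)
  interval_cases hr : a % 6 <;> simp [sixthRootTrace, hr, h2]

theorem three_mul_kernelMoment (hF : Fintype.card F % 3 = 2) {a : ℕ} (ha : 1 ≤ a)
    (ha' : a < Fintype.card F) : 3 * kernelMoment F a = sixthRootTrace a := by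
  induction a using Nat.strong_induction_on with
  | _ a ih =>
    have h02 := kernelMoment_eq_of_add_eq (F := F) hF (a := 0) (b := 2) (k := 0) rfl
    have h0 := three_mul_kernelMoment_zero hF
    obtain rfl | rfl | rfl | ha4 : a = 1 ∨ a = 2 ∨ a = 3 ∨ 4 ≤ a := by omega
    · simp [sixthRootTrace, three_mul_kernelMoment_one hF]
    · simp [sixthRootTrace, ← h02, h0]
    · have h3 := kernelMoment_add_three_add_kernelMoment hF 0
      rw [if_neg (fun h => by have := Nat.le_of_dvd one_pos h; omega), if_pos (dvd_zero _)] at h3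
      simp only [sixthRootTrace]
      push_cast
      linear_combination 3 * h3 - h0
    · obtain ⟨b, rfl⟩ : ∃ b, a = b + 3 := ⟨a - 3, by omega⟩
      rw [kernelMoment_add_three hF (by omega) ha', sixthRootTrace_add_three, mul_neg,
        ih b (by omega) (by omega) (by omega), Int.cast_neg]

theorem kernelMoment_ne_zero (hF : Fintype.card F % 3 = 2) (hodd : Odd (Fintype.card F))
    {a : ℕ} (ha : 1 ≤ a) (ha' : a < Fintype.card F) : kernelMoment F a ≠ 0 :=
  right_ne_zero_of_mul (three_mul_kernelMoment hF ha ha' ▸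
    sixthRootTrace_cast_ne_zero (two_ne_zero_of_odd_card hodd) a)

/-- `3 λ_{(q+1)/2}` is `2` or `-2`, the latter exactly when `-1` is a square (`q = card F`). -/
theorem exists_three_mul_kernelMoment_half (hF : Fintype.card F % 3 = 2)
    (hodd : Odd (Fintype.card F)) :
    ∃ u : F, u ≠ 0 ∧ 3 * kernelMoment F ((Fintype.card F + 1) / 2) = 2 * u ^ 2 := by
  have hq := Nat.odd_iff.mp hodd
  rw [three_mul_kernelMoment hF (by omega) (by omega)]
  rcases Nat.odd_mod_four_iff.mp hq with h | h
  · obtain ⟨s, hs⟩ := FiniteField.isSquare_neg_one_iff.mpr (by omega : Fintype.card F % 4 ≠ 3)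
    have h6 : (Fintype.card F + 1) / 2 % 6 = 3 := by omega
    refine ⟨s, fun h0 => by simp [h0] at hs, ?_⟩
    simp only [sixthRootTrace, h6]
    linear_combination 2 * hs
  · have h6 : (Fintype.card F + 1) / 2 % 6 = 0 := by omega
    exact ⟨1, one_ne_zero, by simp [sixthRootTrace, h6]⟩

theorem exists_prod_kernelMoment_eq_two_mul_sq (hF : Fintype.card F % 3 = 2)
    (hodd : Odd (Fintype.card F)) :
    ∃ c : F, c ≠ 0 ∧ ∏ j : Fin (Fintype.card F - 1), kernelMoment F (j + 1) = 2 * c ^ 2 := by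
  have hq := Nat.odd_iff.mp hodd
  obtain ⟨m, hm⟩ : ∃ m, Fintype.card F = 2 * m + 3 := ⟨(Fintype.card F - 3) / 2, by omega⟩
  obtain ⟨u, hu, hmid⟩ := exists_three_mul_kernelMoment_half hF hodd
  rw [hm, show (2 * m + 3 + 1) / 2 = m + 1 + 1 by omega] at hmid
  have hB : ∏ j ∈ range m, kernelMoment F (j + 1 + 1) ≠ 0 :=
    prod_ne_zero_iff.mpr fun j hj => kernelMoment_ne_zero hF hodd (by omega)
      (by have := mem_range.mp hj; omega)
  have h3 := three_ne_zero_of_card_mod_three hF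
  refine ⟨u * (∏ j ∈ range m, kernelMoment F (j + 1 + 1)) / 3, by simp [hu, hB, h3], ?_⟩
  rw [Fin.prod_univ_eq_prod_range (fun j => kernelMoment F (j + 1)), hm,
    show 2 * m + 3 - 1 = 2 * m + 2 by omega,
    prod_range_eq_mul_sq_of_reflect (fun j => kernelMoment F (j + 1)) m
      fun j _ => kernelMoment_eq_of_add_eq hF (k := 1) (by omega), zero_add]
  field_simp
  linear_combination 3 * kernelMoment F (m + 1 + 1) * three_mul_kernelMoment_one hF + hmid

theorem det_inv_sq_sub_mul_add_sq {n : ℕ} (e : Fin n ≃ Fˣ) :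
    (Matrix.of fun i j => ((e i : F) ^ 2 - e i * e j + (e j : F) ^ 2)⁻¹).det =
      (∏ i, (e i : F)⁻¹) ^ 2 * ∏ j : Fin n, kernelMoment F (j + 1) := by
  have hfactor : (Matrix.of fun i j => ((e i : F) ^ 2 - e i * e j + (e j : F) ^ 2)⁻¹) =
      Matrix.diagonal (fun i => (e i : F)⁻¹) *
        Matrix.of (fun i j => (e i / e j : F) / ((e i / e j : F) ^ 2 - e i / e j + 1)) *
        Matrix.diagonal (fun i => (e i : F)⁻¹) := by
    ext i j
    rw [Matrix.mul_diagonal, Matrix.diagonal_mul, Matrix.of_apply, Matrix.of_apply,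
      inv_sq_sub_mul_add_sq_eq (e i).ne_zero (e j).ne_zero]
  rw [hfactor, Matrix.det_mul, Matrix.det_mul, Matrix.det_diagonal,
    Matrix.det_of_apply_div_eq_prod e (fun t => t / (t ^ 2 - t + 1))]
  simp only [kernelMoment, div_mul_eq_mul_div, ← pow_succ']
  ring

end FiniteField

theorem stmt17 (p : ℕ) [Fact p.Prime] (hodd : Odd p) (h3 : p % 3 = 2) :
    ∃ b : ZMod p, b ≠ 0 ∧
      Matrix.det (Matrix.of fun i j : Fin (p - 1) =>
          ((((i : ℕ) + 1 : ℕ) ^ 2 - ((i : ℕ) + 1) * ((j : ℕ) + 1) + ((j : ℕ) + 1) ^ 2 :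
            ℤ) : ZMod p)⁻¹) = 2 * b ^ 2 := by
  set e := ZMod.finEquivUnits p
  obtain ⟨c, hc, hprod⟩ := FiniteField.exists_prod_kernelMoment_eq_two_mul_sq (F := ZMod p)
    (by rwa [ZMod.card]) (by rwa [ZMod.card])
  rw [ZMod.card] at hprod
  have hentries : (Matrix.of fun i j : Fin (p - 1) =>
        ((((i : ℕ) + 1 : ℕ) ^ 2 - ((i : ℕ) + 1) * ((j : ℕ) + 1) + ((j : ℕ) + 1) ^ 2 :
          ℤ) : ZMod p)⁻¹) =
      Matrix.of fun i j => ((e i : ZMod p) ^ 2 - e i * e j + (e j : ZMod p) ^ 2)⁻¹ := by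
    ext i j
    simp only [Matrix.of_apply, e, ZMod.coe_finEquivUnits_apply]
    push_cast
    ring
  refine ⟨(∏ i, (e i : ZMod p)⁻¹) * c,
    mul_ne_zero (prod_ne_zero_iff.mpr fun i _ => inv_ne_zero (e i).ne_zero) hc, ?_⟩
  rw [hentries, FiniteField.det_inv_sq_sub_mul_add_sq, hprod]
  ring
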